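/- arXiv:2411.16294 — 4 statements merged into one kernel-verified Lean document; each statement's English description precedes it below -/
import Mathlib

section
/- Let φ₁, …, φ_D be real numbers and define Q₁(z) = ∏_{j=1}^{D} (z − e^{2πiφ_j}). Then |∑_{j=1}^{D} e^{2πiφ_j}| ≤ 2 ∫₀¹ |log|Q₁(e^{2πiθ})|| dθ. -/
/-!
Write `e t = exp (2πit)`. For every real `φ`, the first Fourier coefficient of
`t ↦ log ‖e t - e φ‖` is `-e φ / 2`: away from `φ + ℤ` the derivative of `log ‖e t - e φ‖` is
`π cot (π (t - φ))`, and `(e t - e φ) π cot (π (t - φ)) = πi (e t + e φ)`, so integrating by parts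
leaves only an elementary integral. The boundary terms vanish because `x log ‖x‖ → 0` as `x → 0`;
hence the primitive is continuous on `ℝ` and the fundamental theorem of calculus applies off the
countable set `φ + ℤ`. Summing over the roots,
`∑ e φⱼ = -2 ∫₀¹ log |Q₁(e θ)| e θ dθ`, and the bound follows from `‖e θ‖ = 1`.
-/

open Real MeasureTheory

noncomputable def expTwoPiI (t : ℝ) : ℂ := Complex.exp (2 * π * Complex.I * t)

lemma expTwoPiI_eq_exp_ofReal_mul_I (t : ℝ) :
    expTwoPiI t = Complex.exp ((2 * π * t : ℝ) * Complex.I) := by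
  rw [expTwoPiI]; push_cast; ring_nf

lemma expTwoPiI_eq_cos_add_sin_mul_I (t : ℝ) :
    expTwoPiI t = cos (2 * π * t) + sin (2 * π * t) * Complex.I := by
  rw [expTwoPiI_eq_exp_ofReal_mul_I, Complex.exp_mul_I, ← Complex.ofReal_cos, ← Complex.ofReal_sin]

lemma norm_expTwoPiI (t : ℝ) : ‖expTwoPiI t‖ = 1 := by
  rw [expTwoPiI_eq_exp_ofReal_mul_I, Complex.norm_exp_ofReal_mul_I]

lemma expTwoPiI_add (s t : ℝ) : expTwoPiI (s + t) = expTwoPiI s * expTwoPiI t := by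
  simp only [expTwoPiI, ← Complex.exp_add]; push_cast; ring_nf

lemma expTwoPiI_zero : expTwoPiI 0 = 1 := by simp [expTwoPiI]

lemma expTwoPiI_one : expTwoPiI 1 = 1 := by simp [expTwoPiI]

lemma continuous_expTwoPiI : Continuous expTwoPiI := by unfold expTwoPiI; fun_prop

lemma hasDerivAt_expTwoPiI (t : ℝ) :
    HasDerivAt expTwoPiI (2 * π * Complex.I * expTwoPiI t) t := by
  have := ((hasDerivAt_id (t : ℂ)).const_mul (2 * π * Complex.I)).cexp.comp_ofReal
  rw [mul_one] at this
  exact this.congr_deriv (mul_comm _ _)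

lemma analyticAt_expTwoPiI (t : ℝ) : AnalyticAt ℝ expTwoPiI t := by
  rw [show expTwoPiI = Complex.exp ∘ fun t : ℝ => 2 * π * Complex.I * t from rfl]
  exact analyticAt_cexp.restrictScalars.comp (analyticAt_const.mul (Complex.ofRealCLM.analyticAt t))

lemma countable_setOf_expTwoPiI_eq (φ : ℝ) : {t | expTwoPiI t = expTwoPiI φ}.Countable := by
  refine (Set.countable_range fun n : ℤ => φ + n).mono fun t ht => ?_
  obtain ⟨n, hn⟩ := Complex.exp_eq_exp_iff_exists_int.mp ht
  refine ⟨n, ?_⟩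
  have : (t : ℂ) = ((φ + n : ℝ) : ℂ) := by
    apply mul_left_cancel₀ (show 2 * π * Complex.I ≠ 0 by simp [Real.pi_ne_zero])
    rw [hn]; push_cast; ring
  exact_mod_cast this.symm

lemma norm_expTwoPiI_sub_sq (t φ : ℝ) :
    ‖expTwoPiI t - expTwoPiI φ‖ ^ 2 = 2 - 2 * cos (2 * π * (t - φ)) := by
  have : expTwoPiI t - expTwoPiI φ = expTwoPiI φ * (expTwoPiI (t - φ) - 1) := by
    rw [mul_sub, ← expTwoPiI_add, add_sub_cancel, mul_one]
  rw [this, norm_mul, norm_expTwoPiI, one_mul, expTwoPiI_eq_exp_ofReal_mul_I, Complex.sq_norm,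
    Complex.normSq_apply]
  simp only [Complex.sub_re, Complex.sub_im, Complex.exp_ofReal_mul_I_re,
    Complex.exp_ofReal_mul_I_im, Complex.one_re, Complex.one_im]
  nlinarith [sin_sq_add_cos_sq (2 * π * (t - φ))]

lemma log_norm_expTwoPiI_sub (t φ : ℝ) :
    log ‖expTwoPiI t - expTwoPiI φ‖ = log (2 - 2 * cos (2 * π * (t - φ))) / 2 := by
  rw [← norm_expTwoPiI_sub_sq, Real.log_pow]; push_cast; ring

lemma one_sub_cos_ne_zero_of_expTwoPiI_ne {t φ : ℝ} (h : expTwoPiI t ≠ expTwoPiI φ) :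
    1 - cos (2 * π * (t - φ)) ≠ 0 := by
  have := pow_ne_zero 2 (norm_ne_zero_iff.mpr (sub_ne_zero.mpr h))
  rw [norm_expTwoPiI_sub_sq] at this
  contrapose! this
  linarith

lemma hasDerivAt_log_norm_expTwoPiI_sub {t φ : ℝ} (h : 1 - cos (2 * π * (t - φ)) ≠ 0) :
    HasDerivAt (fun s => log ‖expTwoPiI s - expTwoPiI φ‖)
      (π * sin (2 * π * (t - φ)) / (1 - cos (2 * π * (t - φ)))) t := by
  have hne : 2 - 2 * cos (2 * π * (t - φ)) ≠ 0 := fun h0 => h (by linarith)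
  have harg : HasDerivAt (fun s => 2 * π * (s - φ)) (2 * π) t := by
    simpa using ((hasDerivAt_id t).sub_const φ).const_mul (2 * π)
  have := ((harg.cos.const_mul 2).const_sub 2).log hne |>.div_const 2
  simp_rw [log_norm_expTwoPiI_sub]
  refine this.congr_deriv ?_
  field_simp

lemma expTwoPiI_sub_mul_eq {t φ : ℝ} (h : 1 - cos (2 * π * (t - φ)) ≠ 0) :
    (expTwoPiI t - expTwoPiI φ) * ↑(π * sin (2 * π * (t - φ)) / (1 - cos (2 * π * (t - φ))))
      = π * Complex.I * (expTwoPiI t + expTwoPiI φ) := by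
  have he : expTwoPiI t = expTwoPiI φ *
      (cos (2 * π * (t - φ)) + sin (2 * π * (t - φ)) * Complex.I) := by
    rw [← expTwoPiI_eq_cos_add_sin_mul_I, ← expTwoPiI_add, add_sub_cancel]
  have hsc := sin_sq_add_cos_sq (2 * π * (t - φ))
  generalize cos (2 * π * (t - φ)) = c at *
  generalize sin (2 * π * (t - φ)) = s at *
  have h' : (1 : ℂ) - c ≠ 0 := by exact_mod_cast h
  have hsc' : (s : ℂ) ^ 2 + c ^ 2 = 1 := by exact_mod_cast hsc
  rw [he]
  push_cast
  field_simp
  linear_combination expTwoPiI φ * Complex.I * hsc' +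
    expTwoPiI φ * s * (c - 1) * Complex.I_sq

lemma continuous_log_norm_smul {E : Type*} [NormedAddCommGroup E] [NormedSpace ℝ E] :
    Continuous fun x : E => log ‖x‖ • x := by
  refine continuous_iff_continuousAt.2 fun x => ?_
  rcases eq_or_ne x 0 with rfl | hx
  · have h := (continuous_mul_log.tendsto 0).comp (continuous_norm.tendsto' (0 : E) 0 norm_zero)
    simp only [zero_mul, Function.comp_def] at h
    simpa [ContinuousAt, tendsto_zero_iff_norm_tendsto_zero, norm_smul, mul_comm] using h.abs
  · exact (continuous_norm.continuousAt.log (norm_ne_zero_iff.2 hx)).smul continuousAt_id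

noncomputable def logPrimitive (φ t : ℝ) : ℂ :=
  (2 * π * Complex.I)⁻¹ * (log ‖expTwoPiI t - expTwoPiI φ‖ • (expTwoPiI t - expTwoPiI φ)
    - expTwoPiI t / 2 - π * Complex.I * expTwoPiI φ * t)

lemma continuous_logPrimitive (φ : ℝ) : Continuous (logPrimitive φ) := by
  have h : Continuous fun t => log ‖expTwoPiI t - expTwoPiI φ‖ • (expTwoPiI t - expTwoPiI φ) :=
    continuous_log_norm_smul.comp (continuous_expTwoPiI.sub continuous_const)
  have := continuous_expTwoPiI
  unfold logPrimitive
  fun_prop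

lemma hasDerivAt_logPrimitive {φ t : ℝ} (h : expTwoPiI t ≠ expTwoPiI φ) :
    HasDerivAt (logPrimitive φ) (log ‖expTwoPiI t - expTwoPiI φ‖ * expTwoPiI t) t := by
  have hc := one_sub_cos_ne_zero_of_expTwoPiI_ne h
  have he := hasDerivAt_expTwoPiI t
  have := (((hasDerivAt_log_norm_expTwoPiI_sub hc).smul (he.sub_const (expTwoPiI φ))).sub
    (he.div_const 2)).sub ((hasDerivAt_id t).ofReal_comp.const_mul (π * Complex.I * expTwoPiI φ))
    |>.const_mul (2 * π * Complex.I)⁻¹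
  refine this.congr_deriv ?_
  have key := expTwoPiI_sub_mul_eq hc
  generalize π * sin (2 * π * (t - φ)) / (1 - cos (2 * π * (t - φ))) = d at key ⊢
  simp only [Complex.real_smul, Complex.ofReal_one, mul_one]
  field_simp
  linear_combination key

lemma intervalIntegrable_log_norm_expTwoPiI_sub (φ a b : ℝ) :
    IntervalIntegrable (fun t => log ‖expTwoPiI t - expTwoPiI φ‖) volume a b :=
  MeromorphicOn.intervalIntegrable_log_norm fun t _ =>
    ((analyticAt_expTwoPiI t).sub analyticAt_const).meromorphicAt

lemma intervalIntegrable_log_norm_expTwoPiI_sub_mul (φ a b : ℝ) :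
    IntervalIntegrable (fun t => (log ‖expTwoPiI t - expTwoPiI φ‖ : ℂ) * expTwoPiI t) volume a b :=
  have h := intervalIntegrable_log_norm_expTwoPiI_sub φ a b
  IntervalIntegrable.mul_continuousOn ⟨h.1.ofReal, h.2.ofReal⟩ continuous_expTwoPiI.continuousOn

lemma integral_log_norm_expTwoPiI_sub_mul (φ : ℝ) :
    ∫ t in (0:ℝ)..1, (log ‖expTwoPiI t - expTwoPiI φ‖ : ℂ) * expTwoPiI t = -expTwoPiI φ / 2 := by
  rw [integral_eq_of_hasDerivAt_off_countable_of_le _ _ zero_le_one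
    (countable_setOf_expTwoPiI_eq φ) (continuous_logPrimitive φ).continuousOn
    (fun t ht => hasDerivAt_logPrimitive ht.2)
    (intervalIntegrable_log_norm_expTwoPiI_sub_mul φ 0 1)]
  simp only [logPrimitive, expTwoPiI_zero, expTwoPiI_one, Complex.ofReal_zero, Complex.ofReal_one]
  field_simp
  ring

lemma log_norm_prod_expTwoPiI_sub_ae {ι : Type*} (s : Finset ι) (φ : ι → ℝ) :
    ∀ᵐ t, log ‖∏ j ∈ s, (expTwoPiI t - expTwoPiI (φ j))‖
      = ∑ j ∈ s, log ‖expTwoPiI t - expTwoPiI (φ j)‖ := by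
  have hs : (⋃ j ∈ s, {t | expTwoPiI t = expTwoPiI (φ j)}).Countable :=
    s.countable_toSet.biUnion fun j _ => countable_setOf_expTwoPiI_eq (φ j)
  filter_upwards [hs.ae_notMem volume] with t ht
  simp only [Set.mem_iUnion, Set.mem_ofPred_eq, not_exists] at ht
  rw [norm_prod, Real.log_prod]
  exact fun j hj => norm_ne_zero_iff.2 (sub_ne_zero.2 (ht j hj))

lemma integral_log_norm_prod_mul_expTwoPiI {ι : Type*} (s : Finset ι) (φ : ι → ℝ) :
    ∫ t in (0:ℝ)..1, (log ‖∏ j ∈ s, (expTwoPiI t - expTwoPiI (φ j))‖ : ℂ) * expTwoPiI t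
      = -(∑ j ∈ s, expTwoPiI (φ j)) / 2 := by
  rw [intervalIntegral.integral_congr_ae (g := fun t => ∑ j ∈ s,
      (log ‖expTwoPiI t - expTwoPiI (φ j)‖ : ℂ) * expTwoPiI t),
    intervalIntegral.integral_finsetSum fun j _ =>
      intervalIntegrable_log_norm_expTwoPiI_sub_mul (φ j) 0 1]
  · simp only [integral_log_norm_expTwoPiI_sub_mul, ← Finset.sum_div, Finset.sum_neg_distrib]
  · filter_upwards [log_norm_prod_expTwoPiI_sub_ae s φ] with t ht _
    rw [ht, Complex.ofReal_sum, Finset.sum_mul]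

open Real in
theorem sum_roots_bound (D : ℕ) (φ : Fin D → ℝ) :
    ‖∑ j, Complex.exp (2 * π * Complex.I * φ j)‖ ≤
      2 * ∫ θ in (0:ℝ)..1,
        |Real.log ‖∏ j, (Complex.exp (2 * π * Complex.I * θ)
          - Complex.exp (2 * π * Complex.I * φ j))‖| := by
  change ‖∑ j, expTwoPiI (φ j)‖ ≤
    2 * ∫ θ in (0:ℝ)..1, |log ‖∏ j, (expTwoPiI θ - expTwoPiI (φ j))‖|
  calc ‖∑ j, expTwoPiI (φ j)‖
      = 2 * ‖∫ θ in (0:ℝ)..1,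
          (log ‖∏ j, (expTwoPiI θ - expTwoPiI (φ j))‖ : ℂ) * expTwoPiI θ‖ := by
        rw [integral_log_norm_prod_mul_expTwoPiI, norm_div, norm_neg, Complex.norm_two]
        ring
    _ ≤ 2 * ∫ θ in (0:ℝ)..1, |log ‖∏ j, (expTwoPiI θ - expTwoPiI (φ j))‖| := by
        gcongr
        refine (intervalIntegral.norm_integral_le_integral_norm zero_le_one).trans_eq ?_
        simp only [norm_mul, Complex.norm_real, Real.norm_eq_abs, norm_expTwoPiI, mul_one]
end

section
/- Let Q(z) = b_D ∏_{j=1}^{D}(z − r_j e^{2πiφ_j}) be a polynomial of degree D with complex coefficients, with b_D ≠ 0, all r_j > 0, and set b₀ = Q(0) (so b₀ ≠ 0). Define Q₁(z) = ∏_{j=1}^{D}(z − e^{2πiφ_j}). Then for every complex z with |z| = 1, |Q₁(z)| ≤ |Q(z)| / √(|b₀ · b_D|). -/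
/-!
On the unit circle, moving a root `w` radially to `r w` changes the distance to `z` according to
`‖z - r w‖² = r ‖z - w‖² + (1 - r)²`, so `√r ‖z - w‖ ≤ ‖z - r w‖`. Multiplying over the roots gives
`√(r₁ ⋯ r_D) |Q₁(z)| ≤ |Q(z)| / |b_D|`, and `|b₀ b_D| = |b_D|² r₁ ⋯ r_D`.
-/

namespace Complex

theorem sq_norm_sub_ofReal_mul_eq {z w : ℂ} (hz : ‖z‖ = 1) (hw : ‖w‖ = 1) (r : ℝ) :
    ‖z - r * w‖ ^ 2 = r * ‖z - w‖ ^ 2 + (1 - r) ^ 2 := by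
  have hre : (z * (starRingEnd ℂ) (r * w)).re = r * (z * (starRingEnd ℂ) w).re := by
    rw [map_mul, conj_ofReal, mul_left_comm, re_ofReal_mul]
  simp only [Complex.sq_norm, normSq_sub, hre, normSq_mul, normSq_ofReal]
  rw [← Complex.sq_norm, ← Complex.sq_norm, hz, hw]
  ring

theorem sqrt_mul_norm_sub_le_norm_sub_ofReal_mul {z w : ℂ} (hz : ‖z‖ = 1) (hw : ‖w‖ = 1)
    {r : ℝ} (hr : 0 ≤ r) : √r * ‖z - w‖ ≤ ‖z - r * w‖ := by
  rw [← Real.sqrt_sq (norm_nonneg (z - r * w)), ← Real.sqrt_sq (norm_nonneg (z - w)),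
    ← Real.sqrt_mul hr, sq_norm_sub_ofReal_mul_eq hz hw]
  exact Real.sqrt_le_sqrt (le_add_of_nonneg_right (sq_nonneg _))

theorem sqrt_prod_mul_norm_prod_sub_le {ι : Type*} (s : Finset ι) {r : ι → ℝ}
    (hr : ∀ i ∈ s, 0 ≤ r i) {w : ι → ℂ} (hw : ∀ i ∈ s, ‖w i‖ = 1) {z : ℂ} (hz : ‖z‖ = 1) :
    √(∏ i ∈ s, r i) * ‖∏ i ∈ s, (z - w i)‖ ≤ ‖∏ i ∈ s, (z - r i * w i)‖ := by
  rw [Real.sqrt_prod s hr, norm_prod, norm_prod, ← Finset.prod_mul_distrib]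
  exact Finset.prod_le_prod (fun i _ => by positivity)
    fun i hi => sqrt_mul_norm_sub_le_norm_sub_ofReal_mul hz (hw i hi) (hr i hi)

theorem norm_prod_ofReal_mul_of_norm_eq_one {ι : Type*} (s : Finset ι) {r : ι → ℝ}
    (hr : ∀ i ∈ s, 0 ≤ r i) {w : ι → ℂ} (hw : ∀ i ∈ s, ‖w i‖ = 1) :
    ‖∏ i ∈ s, (r i * w i : ℂ)‖ = ∏ i ∈ s, r i := by
  rw [norm_prod]
  exact Finset.prod_congr rfl fun i hi => by
    rw [norm_mul, hw i hi, norm_real, Real.norm_of_nonneg (hr i hi), mul_one]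

end Complex

open Real in
theorem unit_roots_poly_bound (D : ℕ) (bD : ℂ) (hbD : bD ≠ 0)
    (r : Fin D → ℝ) (hr : ∀ j, 0 < r j) (φ : Fin D → ℝ)
    (Q : ℂ → ℂ)
    (hQ : ∀ z, Q z = bD * ∏ j, (z - (r j : ℂ) * Complex.exp (2 * π * Complex.I * φ j)))
    (Q₁ : ℂ → ℂ)
    (hQ₁ : ∀ z, Q₁ z = ∏ j, (z - Complex.exp (2 * π * Complex.I * φ j)))
    (z : ℂ) (hz : ‖z‖ = 1) :
    ‖Q₁ z‖ ≤ ‖Q z‖ / Real.sqrt ‖Q 0 * bD‖ := by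
  set w : Fin D → ℂ := fun j => Complex.exp (2 * π * Complex.I * φ j)
  have hw : ∀ j ∈ Finset.univ, ‖w j‖ = 1 := fun j _ => by
    simp only [w, show 2 * π * Complex.I * φ j = (2 * π * φ j : ℝ) * Complex.I by push_cast; ring,
      Complex.norm_exp_ofReal_mul_I]
  have hr₀ : ∀ j ∈ Finset.univ, 0 ≤ r j := fun j _ => (hr j).le
  have hsqrt : √‖Q 0 * bD‖ = ‖bD‖ * √(∏ j, r j) := by
    rw [hQ 0, norm_mul, norm_mul, Finset.prod_congr rfl fun j _ => zero_sub _, Finset.prod_neg,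
      norm_mul, norm_pow, norm_neg, norm_one, one_pow, one_mul,
      Complex.norm_prod_ofReal_mul_of_norm_eq_one _ hr₀ hw, mul_right_comm, ← sq,
      Real.sqrt_mul (sq_nonneg _), Real.sqrt_sq (norm_nonneg _)]
  have hpos : 0 < ‖bD‖ * √(∏ j, r j) :=
    mul_pos (norm_pos_iff.mpr hbD) (Real.sqrt_pos.mpr (Finset.prod_pos fun j _ => hr j))
  rw [hsqrt, le_div_iff₀ hpos, hQ z, hQ₁ z, norm_mul, mul_left_comm, mul_comm _ √(∏ j, r j)]
  exact mul_le_mul_of_nonneg_left (Complex.sqrt_prod_mul_norm_prod_sub_le _ hr₀ hw hz)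
    (norm_nonneg bD)
end

section
/- Let S be a nonempty finite set, let θ : S → ℝ and s : S → ℝ be functions, let t, h, δ > 0 be reals with (1/|S|)·∑_{α∈S} |s(α)| ≤ 2h. Then |(1/|S|) ∑_{α∈S} e^{2πiθ(α)}(e^{2πi t·s(α)} − 1)| ≤ 4h/δ + 2π·t·δ. In particular, choosing δ = √(2h/(πt)), the left-hand side is at most 2√(8π·h·t). -/
/-!
Each summand has modulus `|e^{2πi t s(α)} - 1|`. Where `|s(α)| ≤ δ` this is at most
`2π t δ` (the map `x ↦ e^{ix}` is 1-Lipschitz); where `|s(α)| > δ` it is at most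
`2 ≤ 2|s(α)|/δ`, a Markov-type bound whose average is at most `4h/δ` by the hypothesis
on the mean of `|s|`. Optimising `4h/δ + 2π t δ` over `δ` gives `2√(8π h t)`.
-/

open Real Complex Finset

lemma norm_exp_I_mul_ofReal_sub_one_le_two (x : ℝ) : ‖exp (I * x) - 1‖ ≤ 2 := by
  calc ‖exp (I * x) - 1‖ ≤ ‖exp (I * x)‖ + ‖(1 : ℂ)‖ := norm_sub_le _ _
    _ = 2 := by rw [norm_exp_I_mul_ofReal, norm_one]; norm_num

lemma norm_exp_I_mul_ofReal_mul_sub_one_le {c δ : ℝ} (hc : 0 ≤ c) (hδ : 0 < δ) (u : ℝ) :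
    ‖exp (I * ↑(c * u)) - 1‖ ≤ c * δ + 2 / δ * |u| := by
  rcases le_or_gt |u| δ with hu | hu
  · calc ‖exp (I * ↑(c * u)) - 1‖ ≤ ‖c * u‖ := Real.norm_exp_I_mul_ofReal_sub_one_le
      _ = c * |u| := by rw [Real.norm_eq_abs, abs_mul, abs_of_nonneg hc]
      _ ≤ c * δ := by gcongr
      _ ≤ c * δ + 2 / δ * |u| := le_add_of_nonneg_right (by positivity)
  · calc ‖exp (I * ↑(c * u)) - 1‖ ≤ 2 := norm_exp_I_mul_ofReal_sub_one_le_two _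
      _ ≤ 2 / δ * |u| := by rw [div_mul_eq_mul_div, le_div_iff₀ hδ]; linarith
      _ ≤ c * δ + 2 / δ * |u| := le_add_of_nonneg_left (by positivity)

lemma norm_one_div_card_smul_sum_le {ι E : Type*} [SeminormedAddCommGroup E] [NormedSpace ℝ E]
    (S : Finset ι) (f : ι → E) (g : ι → ℝ) {c K : ℝ} (hc : 0 ≤ c)
    (hf : ∀ a ∈ S, ‖f a‖ ≤ c + K * g a) :
    ‖(1 / (#S : ℝ)) • ∑ a ∈ S, f a‖ ≤ c + K * ((1 / (#S : ℝ)) * ∑ a ∈ S, g a) := by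
  have hcard : 1 / (#S : ℝ) * #S ≤ 1 := by
    rcases eq_or_ne (#S : ℝ) 0 with h0 | h0
    · simp [h0]
    · rw [one_div_mul_cancel h0]
  calc ‖(1 / (#S : ℝ)) • ∑ a ∈ S, f a‖ = 1 / (#S : ℝ) * ‖∑ a ∈ S, f a‖ := by
        rw [norm_smul, Real.norm_of_nonneg (by positivity)]
    _ ≤ 1 / (#S : ℝ) * ∑ a ∈ S, (c + K * g a) := by
        gcongr; exact (norm_sum_le _ _).trans (sum_le_sum hf)
    _ = 1 / (#S : ℝ) * #S * c + K * ((1 / (#S : ℝ)) * ∑ a ∈ S, g a) := by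
        rw [sum_add_distrib, sum_const, nsmul_eq_mul, ← mul_sum]; ring
    _ ≤ c + K * ((1 / (#S : ℝ)) * ∑ a ∈ S, g a) := by
        gcongr; exact mul_le_of_le_one_left hc hcard

lemma div_sqrt_div_add_mul_sqrt_div {a b : ℝ} (ha : 0 < a) (hb : 0 < b) :
    a / √(a / b) + b * √(a / b) = 2 * √(a * b) := by
  rw [Real.sqrt_div ha.le, Real.sqrt_mul ha.le]
  field_simp
  rw [Real.sq_sqrt ha.le, Real.sq_sqrt hb.le]
  ring

lemma norm_one_div_card_mul_sum_exp_mul_exp_sub_one_le {α : Type*} (S : Finset α)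
    (θ s : α → ℝ) {t h δ : ℝ} (ht : 0 ≤ t) (hδ : 0 < δ)
    (havg : (1 / (#S : ℝ)) * ∑ a ∈ S, |s a| ≤ 2 * h) :
    ‖((1 / (#S : ℝ)) * ∑ a ∈ S,
        exp (2 * π * I * θ a) * (exp (2 * π * I * (t * s a)) - 1))‖
      ≤ 4 * h / δ + 2 * π * t * δ := by
  have hterm : ∀ a ∈ S, ‖exp (2 * π * I * θ a) * (exp (2 * π * I * (t * s a)) - 1)‖
      ≤ 2 * π * t * δ + 2 / δ * |s a| := by
    intro a _
    have hθ : 2 * π * I * θ a = I * ↑(2 * π * θ a) := by push_cast; ring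
    have hs : 2 * π * I * (t * s a) = I * ↑(2 * π * t * s a) := by push_cast; ring
    rw [norm_mul, hθ, norm_exp_I_mul_ofReal, one_mul, hs]
    exact norm_exp_I_mul_ofReal_mul_sub_one_le (by positivity) hδ _
  calc _ ≤ 2 * π * t * δ + 2 / δ * ((1 / (#S : ℝ)) * ∑ a ∈ S, |s a|) := by
        rw [show 1 / ((#S : ℝ) : ℂ) = ((1 / (#S : ℝ) : ℝ) : ℂ) by push_cast; rfl, ← real_smul]
        exact norm_one_div_card_smul_sum_le S _ _ (by positivity) hterm
    _ ≤ 2 * π * t * δ + 2 / δ * (2 * h) := by gcongr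
    _ = 4 * h / δ + 2 * π * t * δ := by ring

open Real in
theorem radial_estimate_general {α : Type*} (S : Finset α)
    (θ s : α → ℝ) (t h δ : ℝ) (ht : 0 < t) (hh : 0 < h) (hδ : 0 < δ)
    (havg : (1 / (S.card : ℝ)) * ∑ a ∈ S, |s a| ≤ 2 * h) :
    ‖((1 / (S.card : ℝ)) * ∑ a ∈ S,
        Complex.exp (2 * π * Complex.I * θ a) *
          (Complex.exp (2 * π * Complex.I * (t * s a)) - 1))‖
      ≤ 4 * h / δ + 2 * π * t * δ ∧
    ‖((1 / (S.card : ℝ)) * ∑ a ∈ S,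
        Complex.exp (2 * π * Complex.I * θ a) *
          (Complex.exp (2 * π * Complex.I * (t * s a)) - 1))‖
      ≤ 2 * Real.sqrt (8 * π * h * t) := by
  refine ⟨norm_one_div_card_mul_sum_exp_mul_exp_sub_one_le S θ s ht.le hδ havg, ?_⟩
  have hopt := div_sqrt_div_add_mul_sqrt_div (a := 4 * h) (b := 2 * π * t)
    (by positivity) (by positivity)
  calc _ ≤ 4 * h / √(4 * h / (2 * π * t)) + 2 * π * t * √(4 * h / (2 * π * t)) :=
        norm_one_div_card_mul_sum_exp_mul_exp_sub_one_le S θ s ht.le (by positivity) havg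
    _ = 2 * √(8 * π * h * t) := by rw [hopt, show 4 * h * (2 * π * t) = 8 * π * h * t by ring]

open Real in
theorem radial_estimate {α : Type*} (S : Finset α) (hS : S.Nonempty)
    (θ s : α → ℝ) (t h δ : ℝ) (ht : 0 < t) (hh : 0 < h) (hδ : 0 < δ)
    (havg : (1 / (S.card : ℝ)) * ∑ a ∈ S, |s a| ≤ 2 * h) :
    ‖((1 / (S.card : ℝ)) * ∑ a ∈ S,
        Complex.exp (2 * π * Complex.I * θ a) *
          (Complex.exp (2 * π * Complex.I * (t * s a)) - 1))‖
      ≤ 4 * h / δ + 2 * π * t * δ ∧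
    ‖((1 / (S.card : ℝ)) * ∑ a ∈ S,
        Complex.exp (2 * π * Complex.I * θ a) *
          (Complex.exp (2 * π * Complex.I * (t * s a)) - 1))‖
      ≤ 2 * Real.sqrt (8 * π * h * t) :=
  radial_estimate_general S θ s t h δ ht hh hδ havg
end

section
/- Let N ≥ 1 and M ≥ 1 be integers, and for n = (n₁,…,n_N) ∈ ℤ^N set r(n) = ∏_{i=1}^{N} max(1, |n_i|), ‖n‖₁ = ∑_i |n_i|, and ‖n‖_∞ = max_i |n_i|. Then ∑_{n ∈ ℤ^N, 0 < ‖n‖_∞ ≤ M} √(‖n‖₁)/r(n) ≤ 4·N·√M·(3 + 2·log M)^{N−1}. -/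
/-!
Subadditivity of the square root gives, for each lattice point `n`,
`√‖n‖₁ / r(n) ≤ ∑ⱼ (√|nⱼ| / max(1, |nⱼ|)) ∏_{i ≠ j} 1 / max(1, |nᵢ|)`.
Summed over the box `‖n‖_∞ ≤ M`, the `j`-th term factors into one-dimensional sums:
`∑_{|k| ≤ M} √|k| / max(1, |k|) = 2 ∑_{m ≤ M} m^{-1/2} ≤ 4 √M` and
`∑_{|k| ≤ M} 1 / max(1, |k|) = 1 + 2 H_M ≤ 3 + 2 log M`.
-/

open Finset Real

lemma Real.sqrt_add_le_add_sqrt (x y : ℝ) : √(x + y) ≤ √x + √y := by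
  rw [sqrt_le_iff]
  refine ⟨by positivity, ?_⟩
  nlinarith [sq_sqrt' (x := x), sq_sqrt' (x := y), le_max_left x 0, le_max_left y 0,
    mul_nonneg (sqrt_nonneg x) (sqrt_nonneg y)]

lemma Real.sqrt_sum_le_sum_sqrt {ι : Type*} (s : Finset ι) (f : ι → ℝ) :
    √(∑ i ∈ s, f i) ≤ ∑ i ∈ s, √(f i) :=
  le_sum_of_subadditive _ sqrt_zero.le sqrt_add_le_add_sqrt s f

lemma inv_sqrt_add_one_le (x : ℝ) (hx : 0 ≤ x) : (√(x + 1))⁻¹ ≤ 2 * (√(x + 1) - √x) := by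
  have hpos : 0 < √(x + 1) := sqrt_pos.2 (by linarith)
  have hmono : √x ≤ √(x + 1) := sqrt_le_sqrt (by linarith)
  rw [inv_le_iff_one_le_mul₀' hpos]
  nlinarith [sq_sqrt hx, sq_sqrt (by linarith : 0 ≤ x + 1)]

lemma sum_Icc_inv_sqrt_le (M : ℕ) : ∑ m ∈ Icc 1 M, (√m)⁻¹ ≤ 2 * √M := by
  induction M with
  | zero => simp
  | succ M ih =>
    rw [sum_Icc_succ_top (by omega), Nat.cast_succ]
    linarith [inv_sqrt_add_one_le M M.cast_nonneg]

lemma sum_Icc_inv_le_one_add_log (M : ℕ) : ∑ m ∈ Icc 1 M, (m : ℝ)⁻¹ ≤ 1 + log M := by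
  simpa [harmonic_eq_sum_Icc] using harmonic_le_one_add_log M

lemma sum_Icc_neg_of_even {β : Type*} [AddCommMonoid β] (f : ℤ → β) (hf : ∀ k, f (-k) = f k)
    (M : ℕ) : ∑ k ∈ Icc (-(M : ℤ)) M, f k = f 0 + 2 • ∑ m ∈ Icc 1 M, f m := by
  have hsplit : Icc (-(M : ℤ)) M = Icc (-(M : ℤ)) (-1) ∪ insert 0 (Icc 1 (M : ℤ)) := by
    ext k; simp only [mem_Icc, mem_union, mem_insert]; omega
  have hneg : ∑ k ∈ Icc (-(M : ℤ)) (-1), f k = ∑ m ∈ Icc 1 M, f m :=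
    sum_nbij' (fun k ↦ (-k).toNat) (fun m ↦ -(m : ℤ))
      (fun _ hk ↦ by rw [mem_Icc] at hk ⊢; omega) (fun _ hm ↦ by rw [mem_Icc] at hm ⊢; omega)
      (fun _ hk ↦ by rw [mem_Icc] at hk; omega) (fun _ _ ↦ by simp)
      (fun _ hk ↦ by rw [mem_Icc] at hk; rw [← hf]; congr; omega)
  have hpos : ∑ k ∈ Icc 1 (M : ℤ), f k = ∑ m ∈ Icc 1 M, f m :=
    sum_nbij' Int.toNat Nat.cast
      (fun _ hk ↦ by rw [mem_Icc] at hk ⊢; omega) (fun _ hm ↦ by rw [mem_Icc] at hm ⊢; omega)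
      (fun _ hk ↦ by rw [mem_Icc] at hk; omega) (fun _ _ ↦ by simp)
      (fun _ hk ↦ by rw [mem_Icc] at hk; congr; omega)
  have hdisj : Disjoint (Icc (-(M : ℤ)) (-1)) (insert 0 (Icc 1 (M : ℤ))) :=
    disjoint_left.2 fun _ h₁ h₂ ↦ by rw [mem_Icc] at h₁; rw [mem_insert, mem_Icc] at h₂; omega
  rw [hsplit, sum_union hdisj, sum_insert (by simp), hneg, hpos, two_nsmul]
  abel

lemma sum_Icc_inv_max_one_abs_le (M : ℕ) :
    ∑ k ∈ Icc (-(M : ℤ)) M, (max 1 |(k : ℝ)|)⁻¹ ≤ 3 + 2 * log M := by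
  rw [sum_Icc_neg_of_even _ (by simp) M]
  have hterm : ∀ m ∈ Icc 1 M, (max 1 |((m : ℤ) : ℝ)|)⁻¹ = (m : ℝ)⁻¹ := fun m hm ↦ by
    have : (1 : ℝ) ≤ m := by exact_mod_cast (mem_Icc.1 hm).1
    simp [this]
  rw [sum_congr rfl hterm]
  simp only [Int.cast_zero, abs_zero, max_eq_left zero_le_one, inv_one, nsmul_eq_mul]
  linarith [sum_Icc_inv_le_one_add_log M]

lemma sum_Icc_sqrt_abs_div_max_one_abs_le (M : ℕ) :
    ∑ k ∈ Icc (-(M : ℤ)) M, √|(k : ℝ)| / max 1 |(k : ℝ)| ≤ 4 * √M := by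
  rw [sum_Icc_neg_of_even _ (by simp) M]
  have hterm : ∀ m ∈ Icc 1 M, √|((m : ℤ) : ℝ)| / max 1 |((m : ℤ) : ℝ)| = (√m)⁻¹ := fun m hm ↦ by
    have : (1 : ℝ) ≤ m := by exact_mod_cast (mem_Icc.1 hm).1
    simp [this, sqrt_div_self]
  rw [sum_congr rfl hterm]
  simp only [Int.cast_zero, abs_zero, sqrt_zero, zero_div, zero_add, nsmul_eq_mul]
  linarith [sum_Icc_inv_sqrt_le M]

lemma sqrt_sum_abs_div_prod_le {ι : Type*} [Fintype ι] [DecidableEq ι] (x : ι → ℝ) :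
    √(∑ i, |x i|) / ∏ i, max 1 |x i| ≤
      ∑ j, ∏ i, if i = j then √|x i| / max 1 |x i| else (max 1 |x i|)⁻¹ := by
  have hfactor (j : ι) : (∏ i, if i = j then √|x i| / max 1 |x i| else (max 1 |x i|)⁻¹) =
      √|x j| / ∏ i, max 1 |x i| := by
    have hsplit (i : ι) : (if i = j then √|x i| / max 1 |x i| else (max 1 |x i|)⁻¹) =
        (if i = j then √|x i| else 1) * (max 1 |x i|)⁻¹ := by
      split_ifs <;> simp [div_eq_mul_inv]
    simp_rw [hsplit, prod_mul_distrib, prod_ite_eq', mem_univ, if_true, prod_inv_distrib,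
      div_eq_mul_inv]
  simp_rw [hfactor, ← sum_div]
  gcongr
  exact sqrt_sum_le_sum_sqrt _ _

lemma prod_ite_eq_mul_pow {ι R : Type*} [Fintype ι] [DecidableEq ι] [CommMonoid R]
    (j : ι) (a b : R) : ∏ i, (if i = j then a else b) = a * b ^ (Fintype.card ι - 1) := by
  simp [prod_ite, filter_eq', filter_ne', card_erase_of_mem]

lemma sum_piFinset_prod_ite_eq {ι α R : Type*} [Fintype ι] [DecidableEq ι] [DecidableEq α]
    [CommSemiring R] (s : Finset α) (g h : α → R) (j : ι) :
    ∑ n ∈ Fintype.piFinset (fun _ ↦ s), ∏ i, (if i = j then g (n i) else h (n i)) =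
      (∑ k ∈ s, g k) * (∑ k ∈ s, h k) ^ (Fintype.card ι - 1) := by
  calc _ = ∏ i, ∑ k ∈ s, (if i = j then g k else h k) :=
        (prod_univ_sum (fun _ ↦ s) fun i k ↦ if i = j then g k else h k).symm
    _ = ∏ i, (if i = j then ∑ k ∈ s, g k else ∑ k ∈ s, h k) := by
        congr! 1 with i; split_ifs <;> rfl
    _ = _ := prod_ite_eq_mul_pow j _ _

theorem lattice_sum_bound_general (N M : ℕ) :
    ∑ n ∈ (Finset.Icc (fun _ : Fin N => -(M : ℤ)) (fun _ => (M : ℤ))).filter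
        (fun n => n ≠ 0),
      Real.sqrt (∑ i, |(n i : ℝ)|) / ∏ i, max 1 |(n i : ℝ)|
      ≤ 4 * N * Real.sqrt M * (3 + 2 * Real.log M) ^ (N - 1) := by
  set I := Icc (-(M : ℤ)) M
  calc _ ≤ ∑ n ∈ Fintype.piFinset (fun _ : Fin N ↦ I),
        √(∑ i, |(n i : ℝ)|) / ∏ i, max 1 |(n i : ℝ)| :=
        sum_le_sum_of_subset_of_nonneg (filter_subset _ _) fun _ _ _ ↦ by positivity
    _ ≤ ∑ n ∈ Fintype.piFinset (fun _ : Fin N ↦ I), ∑ j, ∏ i,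
        if i = j then √|(n i : ℝ)| / max 1 |(n i : ℝ)| else (max 1 |(n i : ℝ)|)⁻¹ :=
        sum_le_sum fun n _ ↦ sqrt_sum_abs_div_prod_le _
    _ = ∑ _j : Fin N, (∑ k ∈ I, √|(k : ℝ)| / max 1 |(k : ℝ)|) *
        (∑ k ∈ I, (max 1 |(k : ℝ)|)⁻¹) ^ (N - 1) := by
        rw [sum_comm]
        simp_rw [sum_piFinset_prod_ite_eq I (fun k : ℤ ↦ √|(k : ℝ)| / max 1 |(k : ℝ)|)
          (fun k : ℤ ↦ (max 1 |(k : ℝ)|)⁻¹), Fintype.card_fin]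
    _ ≤ ∑ _j : Fin N, 4 * √M * (3 + 2 * log M) ^ (N - 1) := by
        gcongr
        · exact sum_Icc_sqrt_abs_div_max_one_abs_le M
        · exact sum_Icc_inv_max_one_abs_le M
    _ = _ := by simp only [sum_const, card_univ, Fintype.card_fin, nsmul_eq_mul]; ring

theorem lattice_sum_bound (N M : ℕ) (hN : 1 ≤ N) (hM : 1 ≤ M) :
    ∑ n ∈ (Finset.Icc (fun _ : Fin N => -(M : ℤ)) (fun _ => (M : ℤ))).filter
        (fun n => n ≠ 0),
      Real.sqrt (∑ i, |(n i : ℝ)|) / ∏ i, max 1 |(n i : ℝ)|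
      ≤ 4 * N * Real.sqrt M * (3 + 2 * Real.log M) ^ (N - 1) :=
  lattice_sum_bound_general N M
end
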